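/- arXiv:1102.2689 — 2 statements merged into one kernel-verified Lean document; each statement's English description precedes it below -/
import Mathlib

section
/- Let w ∈ S_n and let x, y ∈ c(Λ_w). If y covers x in the subposet (c(Λ_w), product order) — that is, x < y and there is no z ∈ c(Λ_w) with x < z < y — then Σ_{i=1}^n y_i = Σ_{i=1}^n x_i + 1. Consequently (c(Λ_w), product order) is a ranked poset whose rank function is the coordinate sum, and its rank-generating function equals that of the weak order interval Λ_w: for every k, |{v ∈ S_n : v ≤_L w, ℓ(v) = k}| = |{x ∈ c(Λ_w) : Σ_{i=1}^n x_i = k}|. -/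
/-- The inversion set of `w`: pairs of positions `(i,j)` with `i < j` and `w i > w j`. -/
def Invs {n : ℕ} (w : Equiv.Perm (Fin n)) : Finset (Fin n × Fin n) :=
  Finset.univ.filter (fun p => p.1 < p.2 ∧ w p.2 < w p.1)

/-- The length (number of inversions) of `w`. -/
def len {n : ℕ} (w : Equiv.Perm (Fin n)) : ℕ := (Invs w).card

/-- The `i`-th entry of the Lehmer code of `w`. -/
def lehmer {n : ℕ} (w : Equiv.Perm (Fin n)) (i : Fin n) : ℕ :=
  ((Invs w).filter (fun p => p.1 = i)).card

/-- The extended Lehmer code `m_{i,j}(w)`: the number of inversions `(i,k)` with `k < j`. -/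
def mext {n : ℕ} (w : Equiv.Perm (Fin n)) (i : Fin n) (j : Fin (n + 1)) : ℕ :=
  ((Invs w).filter (fun p => p.1 = i ∧ (p.2 : ℕ) < (j : ℕ))).card

/-- The left weak order: `v ≤_L w` iff `inv(v) ⊆ inv(w)`. -/
def leftWeak {n : ℕ} (v w : Equiv.Perm (Fin n)) : Prop := Invs v ⊆ Invs w

/-- The value of `w` extended to `Fin (n+1)` by fixing the last point
(the `1`-indexed convention `w(n+1) = n+1` becomes `wval w n = n` here). -/
def wval {n : ℕ} (w : Equiv.Perm (Fin n)) (j : Fin (n + 1)) : ℕ :=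
  if h : (j : ℕ) < n then (w ⟨j, h⟩ : ℕ) else n

/-- The set of non-inversions of `w`: pairs `(i,j)` with `i ≤ j ≤ n+1` and `w i ≤ w j`,
where `w` is extended by fixing the last point. -/
def Ninvs {n : ℕ} (w : Equiv.Perm (Fin n)) : Finset (Fin n × Fin (n + 1)) :=
  Finset.univ.filter (fun p => (p.1 : ℕ) ≤ (p.2 : ℕ) ∧ (w p.1 : ℕ) ≤ wval w p.2)

/-- The set of Lehmer codes of elements of the weak order interval `Λ_w = [id, w]`. -/
def codeSet {n : ℕ} (w : Equiv.Perm (Fin n)) : Set (Fin n → ℕ) :=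
  {x | ∃ v : Equiv.Perm (Fin n), leftWeak v w ∧ lehmer v = x}

/-- The tuple `b_{i,x}(w)`: the `j`-th coordinate is `0` if `j < i` or `(i,j) ∈ inv(w)`,
and is `max {0, x - m_{i,j}(w)}` (truncated subtraction) if `j ≥ i` and `(i,j) ∈ ninv(w)`. -/
def bmin {n : ℕ} (w : Equiv.Perm (Fin n)) (i : Fin n) (x : ℕ) : Fin n → ℕ :=
  fun j => if (i : ℕ) ≤ (j : ℕ) ∧ (w i : ℕ) ≤ (w j : ℕ) then x - mext w i j.castSucc else 0

/-- The set `M_w` of all `b_{i,x}(w)` for `1 ≤ x ≤ c_i(w)`. -/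
def Mset {n : ℕ} (w : Equiv.Perm (Fin n)) : Set (Fin n → ℕ) :=
  {z | ∃ (i : Fin n) (x : ℕ), 1 ≤ x ∧ x ≤ lehmer w i ∧ z = bmin w i x}

/-- The direct sum `v × w ∈ S_{m+n}` of permutations. -/
def dsum {m n : ℕ} (v : Equiv.Perm (Fin m)) (w : Equiv.Perm (Fin n)) :
    Equiv.Perm (Fin (m + n)) :=
  finSumFinEquiv.permCongr (Equiv.sumCongr v w)

/-! The Lehmer code is injective: reading the code from the right, once the relative order of the
values at the positions after `a` is known, `c_a(u)` says which of those positions carry values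
below `u a`. Together with `∑ i, c_i(u) = ℓ(u)` this identifies the two rank-generating functions.

For the covers, let `c(u) < c(v)` with `u, v ≤_L w` and let `a` be the last coordinate where the
codes differ. Then `u` and `v` order the positions after `a` alike. Let `b > a` be the position
after `a` carrying the least value of `u` above `u a`; then `u * swap a b` has code `c(u) + e_a`.
Moreover `b` is the `(c_a(u) + 1)`-st position after `a` by value, so `c_a(u) < c_a(v)` makes
`(a, b)` an inversion of `v`, hence of `w`, and this is exactly what `u * swap a b ≤_L w` needs.
So `c(u) + e_a` lies in `c(Λ_w)` strictly above `c(u)` and below `c(v)`. -/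

open Finset Equiv Function

variable {n : ℕ}

lemma mem_Invs {u : Perm (Fin n)} {p : Fin n × Fin n} :
    p ∈ Invs u ↔ p.1 < p.2 ∧ u p.2 < u p.1 := by
  simp [Invs]

lemma lehmer_eq_card (u : Perm (Fin n)) (i : Fin n) :
    lehmer u i = #{k ∈ Ioi i | u k < u i} := by
  refine card_nbij' Prod.snd (fun k => (i, k)) ?_ ?_ ?_ ?_
  · rintro ⟨j, k⟩ hp
    obtain ⟨h, rfl : j = i⟩ := mem_filter.1 hp
    simpa [mem_Invs] using h
  · intro k hk
    simp_all [mem_Invs]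
  · rintro ⟨j, k⟩ hp
    simp_all [mem_Invs]
  · intro k _
    rfl

lemma lehmer_le_card_Ioi (u : Perm (Fin n)) (i : Fin n) : lehmer u i ≤ #(Ioi i) := by
  rw [lehmer_eq_card]
  exact card_filter_le _ _

lemma sum_lehmer (u : Perm (Fin n)) : ∑ i, lehmer u i = len u :=
  (card_eq_sum_card_fiberwise fun p _ => mem_univ p.1).symm

lemma val_eq_card_filter_lt (u : Perm (Fin n)) (k : Fin n) : (u k : ℕ) = #{l | u l < u k} := by
  rw [card_equiv u (t := Iio (u k)) (by simp), Fin.card_Iio]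

lemma exists_apply_gt_of_lehmer_lt_card {u : Perm (Fin n)} {a : Fin n}
    (h : lehmer u a < #(Ioi a)) : ∃ k, a < k ∧ u a < u k := by
  by_contra! hle
  refine h.ne ?_
  rw [lehmer_eq_card, filter_true_of_mem]
  intro k hk
  exact (hle k (mem_Ioi.1 hk)).lt_of_ne (u.injective.ne (mem_Ioi.1 hk).ne')

lemma lt_iff_card_le_lehmer (u : Perm (Fin n)) {a k : Fin n} (hak : a < k) :
    u k < u a ↔ #{t ∈ Ioi a | u t ≤ u k} ≤ lehmer u a := by
  rw [lehmer_eq_card]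
  constructor
  · intro h
    exact card_le_card (monotone_filter_right _ fun t _ ht => ht.trans_lt h)
  · intro h
    by_contra! hle
    have hsub : {t ∈ Ioi a | u t < u a} ⊂ {t ∈ Ioi a | u t ≤ u k} := by
      refine (ssubset_iff_of_subset ?_).2 ⟨k, by simp [hak], by simp [hle]⟩
      exact monotone_filter_right _ fun t _ ht => (ht.trans_le hle).le
    exact (card_lt_card hsub).not_ge h

lemma lt_iff_lt_of_forall_lt {u v : Perm (Fin n)} {s : Set (Fin n)}
    (h : ∀ k ∈ s, ∀ l ∈ s, k < l → (u l < u k ↔ v l < v k)) :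
    ∀ k ∈ s, ∀ l ∈ s, u k < u l ↔ v k < v l := by
  intro k hk l hl
  rcases lt_trichotomy k l with hkl | rfl | hlk
  · rw [← (u.injective.ne hkl.ne).le_iff_lt, ← (v.injective.ne hkl.ne).le_iff_lt, ← not_lt,
      ← not_lt, h k hk l hl hkl]
  · simp
  · exact h l hl k hk hlk

lemma card_filter_le_eq_of_lt_iff_lt {u v : Perm (Fin n)} {a k : Fin n}
    (hord : ∀ t ∈ Set.Ioi a, ∀ t' ∈ Set.Ioi a, u t < u t' ↔ v t < v t') (hk : a < k) :
    #{t ∈ Ioi a | u t ≤ u k} = #{t ∈ Ioi a | v t ≤ v k} := by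
  refine congrArg card (filter_congr fun t ht => ?_)
  rw [← not_lt, ← not_lt, hord k hk t (mem_Ioi.1 ht)]

theorem lt_iff_lt_of_lehmer_eq {u v : Perm (Fin n)} {s : Set (Fin n)} (hs : IsUpperSet s)
    (h : ∀ i ∈ s, lehmer u i = lehmer v i) : ∀ k ∈ s, ∀ l ∈ s, u k < u l ↔ v k < v l := by
  refine lt_iff_lt_of_forall_lt fun k => ?_
  induction k using WellFoundedGT.induction with
  | _ k ih =>
    intro hk l _ hkl
    have hord : ∀ t ∈ Set.Ioi k, ∀ t' ∈ Set.Ioi k, u t < u t' ↔ v t < v t' :=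
      lt_iff_lt_of_forall_lt fun t ht l hl => ih t ht (hs ht.le hk) l (hs hl.le hk)
    rw [lt_iff_card_le_lehmer u hkl, lt_iff_card_le_lehmer v hkl,
      card_filter_le_eq_of_lt_iff_lt hord hkl, h k hk]

theorem lehmer_injective : Injective (lehmer (n := n)) := by
  intro u v h
  have hord := lt_iff_lt_of_lehmer_eq isUpperSet_univ fun i _ => congrFun h i
  ext k
  rw [val_eq_card_filter_lt u, val_eq_card_filter_lt v]
  exact congrArg card (filter_congr fun l _ => hord l trivial k trivial)

section Swap

variable {u : Perm (Fin n)} {a b : Fin n}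

lemma apply_lt_iff_of_forall_le (hub : u a < u b)
    (hmin : ∀ k, a < k → u a < u k → u b ≤ u k) {k : Fin n} (hak : a < k) :
    u k < u b ↔ u k < u a := by
  refine ⟨fun hkb => ?_, fun hka => hka.trans hub⟩
  by_contra! hka
  exact (hmin k hak (hka.lt_of_ne (u.injective.ne hak.ne))).not_gt hkb

lemma card_filter_le_eq_lehmer_add_one (hab : a < b) (hub : u a < u b)
    (hmin : ∀ k, a < k → u a < u k → u b ≤ u k) :
    #{t ∈ Ioi a | u t ≤ u b} = lehmer u a + 1 := by
  rw [lehmer_eq_card, ← card_insert_of_notMem (s := {t ∈ Ioi a | u t < u a}) (a := b)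
    (by simp [hub.le])]
  congr 1
  ext t
  simp only [mem_filter, mem_Ioi, mem_insert]
  rcases eq_or_ne t b with rfl | htb
  · simp [hab]
  · simp only [htb, false_or, (u.injective.ne htb).le_iff_lt]
    exact and_congr_right fun hat => apply_lt_iff_of_forall_le hub hmin hat

lemma lehmer_mul_swap (hab : a < b) (hub : u a < u b)
    (hmin : ∀ k, a < k → u a < u k → u b ≤ u k) :
    lehmer (u * swap a b) = lehmer u + Pi.single a 1 := by
  funext i
  rw [Pi.add_apply, lehmer_eq_card]
  rcases lt_trichotomy i a with hia | rfl | hai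
  · rw [Pi.single_eq_of_ne hia.ne, add_zero, lehmer_eq_card]
    refine card_equiv (swap a b) fun k => ?_
    simp only [mem_filter, mem_Ioi, Perm.mul_apply,
      swap_apply_of_ne_of_ne hia.ne (hia.trans hab).ne, and_congr_left_iff]
    intro _
    rw [swap_apply_def]
    split_ifs with hka hkb
    · simp [hka, hia, hia.trans hab]
    · simp [hkb, hia, hia.trans hab]
    · rfl
  · rw [Pi.single_eq_same, ← card_filter_le_eq_lehmer_add_one hab hub hmin]
    refine congrArg card (filter_congr fun k hk => ?_)
    rw [Perm.mul_apply, Perm.mul_apply, swap_apply_left]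
    rcases eq_or_ne k b with rfl | hkb
    · simp [hub]
    · rw [swap_apply_of_ne_of_ne (mem_Ioi.1 hk).ne' hkb, (u.injective.ne hkb).le_iff_lt]
  · rw [Pi.single_eq_of_ne hai.ne', add_zero, lehmer_eq_card]
    refine congrArg card (filter_congr fun k hk => ?_)
    have hak := hai.trans (mem_Ioi.1 hk)
    rw [Perm.mul_apply, Perm.mul_apply]
    rcases eq_or_ne i b with rfl | hib
    · rw [swap_apply_right, swap_apply_of_ne_of_ne hak.ne' (mem_Ioi.1 hk).ne',
        apply_lt_iff_of_forall_le hub hmin hak]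
    rw [swap_apply_of_ne_of_ne hai.ne' hib]
    rcases eq_or_ne k b with rfl | hkb
    · rw [swap_apply_right]
      exact ⟨fun h => (hmin i hai h).lt_of_ne (u.injective.ne hib.symm), hub.trans⟩
    · rw [swap_apply_of_ne_of_ne hak.ne' hkb]

lemma leftWeak_mul_swap {w : Perm (Fin n)} (hu : leftWeak u w) (hw : (a, b) ∈ Invs w)
    (hab : a < b) (hub : u a < u b) (hmin : ∀ k, a < k → u a < u k → u b ≤ u k) :
    leftWeak (u * swap a b) w := by
  have hinv : ∀ {i k}, i < k → u k < u i → w k < w i := fun {i k} hik h =>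
    (mem_Invs.1 (hu (mem_Invs.2 ⟨hik, h⟩ : (i, k) ∈ Invs u))).2
  rintro ⟨i, k⟩ h
  obtain ⟨hik, hlt⟩ := mem_Invs.1 h
  simp only [Perm.mul_apply] at hlt
  refine mem_Invs.2 ⟨hik, ?_⟩
  rcases eq_or_ne i a with rfl | hia
  · rcases eq_or_ne k b with rfl | hkb
    · exact (mem_Invs.1 hw).2
    · rw [swap_apply_left, swap_apply_of_ne_of_ne hik.ne' hkb] at hlt
      exact hinv hik ((apply_lt_iff_of_forall_le hub hmin hik).1 hlt)
  rcases eq_or_ne i b with rfl | hib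
  · rw [swap_apply_right, swap_apply_of_ne_of_ne (hab.trans hik).ne' hik.ne'] at hlt
    exact hinv hik (hlt.trans hub)
  rw [swap_apply_of_ne_of_ne hia hib] at hlt
  rcases eq_or_ne k a with rfl | hka
  · rw [swap_apply_left] at hlt
    exact hinv hik (hub.trans hlt)
  rcases eq_or_ne k b with rfl | hkb
  · rw [swap_apply_right] at hlt
    rcases hia.lt_or_gt with hia | hai
    · exact (mem_Invs.1 hw).2.trans (hinv hia hlt)
    · exact hinv hik ((hmin i hai hlt).lt_of_ne (u.injective.ne hib.symm))
  · rw [swap_apply_of_ne_of_ne hka hkb] at hlt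
    exact hinv hik hlt

end Swap

lemma apply_lt_of_lehmer_lt {u v : Perm (Fin n)} {a b : Fin n} (hab : a < b) (hub : u a < u b)
    (hmin : ∀ k, a < k → u a < u k → u b ≤ u k)
    (hagree : ∀ i, a < i → lehmer u i = lehmer v i) (hlt : lehmer u a < lehmer v a) :
    v b < v a := by
  have hord := lt_iff_lt_of_lehmer_eq (isUpperSet_Ioi a) hagree
  rw [lt_iff_card_le_lehmer v hab, ← card_filter_le_eq_of_lt_iff_lt hord hab,
    card_filter_le_eq_lehmer_add_one hab hub hmin]
  exact hlt

lemma exists_leftWeak_lehmer_eq_add_single {u v w : Perm (Fin n)} (hu : leftWeak u w)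
    (hv : leftWeak v w) {a : Fin n} (hagree : ∀ i, a < i → lehmer u i = lehmer v i)
    (hlt : lehmer u a < lehmer v a) :
    ∃ u', leftWeak u' w ∧ lehmer u' = lehmer u + Pi.single a 1 := by
  obtain ⟨k, hak, huk⟩ :=
    exists_apply_gt_of_lehmer_lt_card (hlt.trans_le (lehmer_le_card_Ioi v a))
  obtain ⟨b, hb, hmin⟩ := exists_min_image {k ∈ Ioi a | u a < u k} u ⟨k, by simp [hak, huk]⟩
  obtain ⟨hab, hub⟩ : a < b ∧ u a < u b := by simpa using hb
  have hmin' : ∀ k, a < k → u a < u k → u b ≤ u k :=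
    fun k hak huk => hmin k (by simp [hak, huk])
  have hw : (a, b) ∈ Invs w :=
    hv (mem_Invs.2 ⟨hab, apply_lt_of_lehmer_lt hab hub hmin' hagree hlt⟩)
  exact ⟨u * swap a b, leftWeak_mul_swap hu hw hab hub hmin', lehmer_mul_swap hab hub hmin'⟩

lemma Pi.exists_lt_forall_gt_eq {ι β : Type*} [Fintype ι] [LinearOrder ι] [PartialOrder β]
    {x y : ι → β} (hxy : x < y) : ∃ a, x a < y a ∧ ∀ i, a < i → x i = y i := by
  classical
  obtain ⟨hle, i, hi⟩ := Pi.lt_def.1 hxy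
  obtain ⟨a, ha, hmax⟩ := exists_max_image {i | x i < y i} id ⟨i, by simpa using hi⟩
  refine ⟨a, by simpa using ha, fun j haj => (hle j).eq_of_not_lt fun hj => ?_⟩
  exact (hmax j (by simpa using hj)).not_gt haj

lemma exists_add_single_mem_codeSet {w : Perm (Fin n)} {x y : Fin n → ℕ} (hx : x ∈ codeSet w)
    (hy : y ∈ codeSet w) (hxy : x < y) : ∃ a, x a < y a ∧ x + Pi.single a 1 ∈ codeSet w := by
  obtain ⟨u, hu, rfl⟩ := hx
  obtain ⟨v, hv, rfl⟩ := hy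
  obtain ⟨a, hlt, hagree⟩ := Pi.exists_lt_forall_gt_eq hxy
  obtain ⟨u', hu', hcode⟩ := exists_leftWeak_lehmer_eq_add_single hu hv hagree hlt
  exact ⟨a, hlt, u', hu', hcode⟩

/-- Theorem 3.3: in the subposet `(c(Λ_w), ≤)` of `ℕ^n` (product order), every covering
relation increases the coordinate sum by exactly `1`; consequently `c(Λ_w)` is ranked by
the coordinate sum and its rank-generating function equals that of the weak order
interval `Λ_w`: for every `k`, the number of `v ≤_L w` with `ℓ(v) = k` equals the number
of codes `x ∈ c(Λ_w)` with coordinate sum `k`. -/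
theorem codeSet_rank {n : ℕ} (w : Equiv.Perm (Fin n)) :
    (∀ x y : Fin n → ℕ, x ∈ codeSet w → y ∈ codeSet w → x < y →
      (¬ ∃ z ∈ codeSet w, x < z ∧ z < y) →
      ∑ i, y i = ∑ i, x i + 1) ∧
    (∀ k : ℕ,
      {v : Equiv.Perm (Fin n) | leftWeak v w ∧ len v = k}.ncard =
      {x : Fin n → ℕ | x ∈ codeSet w ∧ ∑ i, x i = k}.ncard) := by
  constructor
  · intro x y hx hy hxy hcover
    obtain ⟨a, hlt, hz⟩ := exists_add_single_mem_codeSet hx hy hxy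
    have hxz : x < x + Pi.single a 1 := lt_add_of_pos_right x (by simp)
    have hzy : x + Pi.single a 1 ≤ y := by
      intro i
      rcases eq_or_ne i a with rfl | hia
      · simpa using hlt
      · simpa [hia] using hxy.le i
    obtain rfl : x + Pi.single a 1 = y :=
      hzy.eq_of_not_lt fun hzy' => hcover ⟨_, hz, hxz, hzy'⟩
    simp [sum_add_distrib]
  · intro k
    have himage : {x : Fin n → ℕ | x ∈ codeSet w ∧ ∑ i, x i = k}
        = lehmer '' {v : Equiv.Perm (Fin n) | leftWeak v w ∧ len v = k} := by
      ext x
      constructor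
      · rintro ⟨⟨v, hv, rfl⟩, rfl⟩
        exact ⟨v, ⟨hv, (sum_lehmer v).symm⟩, rfl⟩
      · rintro ⟨v, ⟨hv, rfl⟩, rfl⟩
        exact ⟨⟨v, hv, rfl⟩, sum_lehmer v⟩
    rw [himage, Set.ncard_image_of_injective _ lehmer_injective]
end

section
/- Let w ∈ S_n, let 1 ≤ i < j ≤ n, 1 ≤ x ≤ c_i(w), and 1 ≤ y ≤ c_j(w). Then b_{i,x}(w) is not ≤ b_{j,y}(w) in the product order. -/
theorem mext_castSucc_self {n : ℕ} (w : Equiv.Perm (Fin n)) (i : Fin n) :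
    mext w i i.castSucc = 0 := by
  rw [mext, Finset.card_eq_zero, Finset.filter_eq_empty_iff]
  rintro ⟨k, l⟩ hinv ⟨rfl, hlk⟩
  have hkl : k < l := (Finset.mem_filter.mp hinv).2.1
  exact absurd hlk (Nat.not_lt.mpr hkl.le)

theorem bmin_self {n : ℕ} (w : Equiv.Perm (Fin n)) (i : Fin n) (x : ℕ) :
    bmin w i x i = x := by
  simp [bmin, mext_castSucc_self]

theorem bmin_of_lt {n : ℕ} (w : Equiv.Perm (Fin n)) {i j : Fin n} (x : ℕ) (hji : j < i) :
    bmin w i x j = 0 :=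
  if_neg fun h => (Fin.lt_def.mp hji).not_ge h.1

theorem bmin_not_le_general {n : ℕ} (w : Equiv.Perm (Fin n)) (i j : Fin n) (x y : ℕ)
    (hij : i < j) (hx1 : 1 ≤ x) :
    ¬ bmin w i x ≤ bmin w j y := by
  intro h
  have hi : x ≤ 0 := by simpa only [bmin_self, bmin_of_lt w y hij] using h i
  omega

/-- Lemma 4.10: if `i < j`, `1 ≤ x ≤ c_i(w)` and `1 ≤ y ≤ c_j(w)`, then
`b_{i,x}(w)` is not below `b_{j,y}(w)` in the product order. -/
theorem bmin_not_le {n : ℕ} (w : Equiv.Perm (Fin n)) (i j : Fin n) (x y : ℕ)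
    (hij : i < j) (hx1 : 1 ≤ x) (hx2 : x ≤ lehmer w i)
    (hy1 : 1 ≤ y) (hy2 : y ≤ lehmer w j) :
    ¬ bmin w i x ≤ bmin w j y :=
  bmin_not_le_general w i j x y hij hx1
end
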